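/- arXiv:2306.00215 — 3 statements merged into one kernel-verified Lean document; each statement's English description precedes it below -/
import Mathlib

section
/- With O_A = diag(−i(Q²−Q^{−2}), 0, i(Q²−Q^{−2})) and O_B the 3×3 matrix with rows (0,1,0), (−(Q²−Q^{−2})²/2, 0, 1), (0, −(Q²−Q^{−2})²/2, 0) over ℂ(Q), the q-Serre-type relations hold: O_A² O_B + O_B O_A² + (Q²−Q^{−2})² O_B = 0 and O_B² O_A + O_A O_B² + (Q²−Q^{−2})² O_A = 0. -/
set_option synthInstance.maxHeartbeats 1000000
set_option maxHeartbeats 1000000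

noncomputable section

/-- The variable `Q` in the field `ℂ(Q)` of rational functions. -/
def Qv : RatFunc ℂ := RatFunc.X

/-- The imaginary unit `i` viewed as a constant in `ℂ(Q)`. -/
def ii : RatFunc ℂ := RatFunc.C Complex.I

/-- The element `Q² − Q^{−2}` of `ℂ(Q)`. -/
def w : RatFunc ℂ := Qv ^ 2 - (Qv ^ 2)⁻¹

/-- `O_A = diag(−i(Q²−Q^{−2}), 0, i(Q²−Q^{−2}))`. -/
def OA : Matrix (Fin 3) (Fin 3) (RatFunc ℂ) :=
  !![-(ii * w), 0, 0; 0, 0, 0; 0, 0, ii * w]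

/-- `O_B` with rows `(0,1,0)`, `(−(Q²−Q^{−2})²/2, 0, 1)`, `(0, −(Q²−Q^{−2})²/2, 0)`. -/
def OB : Matrix (Fin 3) (Fin 3) (RatFunc ℂ) :=
  !![0, 1, 0; -(w ^ 2) / 2, 0, 1; 0, -(w ^ 2) / 2, 0]

instance : CharZero (RatFunc ℂ) :=
  charZero_of_injective_algebraMap (algebraMap ℂ (RatFunc ℂ)).injective

lemma ii_sq : ii ^ 2 = -1 := by
  rw [ii, ← map_pow, Complex.I_sq, map_neg, map_one]

/-- the q-Serre-type relations
`O_A² O_B + O_B O_A² + (Q²−Q^{−2})² O_B = 0` and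
`O_B² O_A + O_A O_B² + (Q²−Q^{−2})² O_A = 0`. -/
theorem stmt13 :
    OA ^ 2 * OB + OB * OA ^ 2 + w ^ 2 • OB = 0 ∧
    OB ^ 2 * OA + OA * OB ^ 2 + w ^ 2 • OA = 0 := by
  constructor <;>
  · rw [pow_two, OA, OB]
    ext i j
    fin_cases i <;> fin_cases j <;>
      simp [Matrix.mul_apply, Fin.sum_univ_succ, Matrix.vecHead, Matrix.vecTail]
    all_goals ring_nf
    all_goals try simp only [ii_sq]
    all_goals ring_nf

end
end

section
/- With O_A = diag(−i(Q²−Q^{−2}), 0, i(Q²−Q^{−2})) and O_B the 3×3 matrix with rows (0,1,0), (−(Q²−Q^{−2})²/2, 0, 1), (0, −(Q²−Q^{−2})²/2, 0) over ℂ(Q), one has O_B² O_A² + (Q²−Q^{−2})²(O_A² + O_B²) + (Q²−Q^{−2})⁴ = 0 (where the last term means the scalar matrix). -/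
set_option synthInstance.maxHeartbeats 1000000
set_option maxHeartbeats 1000000

noncomputable section

/-- the Casimir relation
`O_B² O_A² + (Q²−Q^{−2})²(O_A² + O_B²) + (Q²−Q^{−2})⁴ = 0`
(the last term being the corresponding scalar matrix). -/
theorem stmt14 :
    OB ^ 2 * OA ^ 2 + w ^ 2 • (OA ^ 2 + OB ^ 2) +
      w ^ 4 • (1 : Matrix (Fin 3) (Fin 3) (RatFunc ℂ)) = 0 := by
  haveI : CharZero (RatFunc ℂ) :=
    (RingHom.charZero_iff (RatFunc.C (K := ℂ)).injective).mp inferInstance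
  have hii : ii ^ 2 = -1 := by
    simp [ii, sq, ← map_mul, Complex.I_mul_I]
  have hA : OA ^ 2 = !![-(w ^ 2), 0, 0; 0, 0, 0; 0, 0, -(w ^ 2)] := by
    ext i j
    fin_cases i <;> fin_cases j <;>
      simp [OA, pow_succ, pow_zero, one_mul, Matrix.mul_apply, Fin.sum_univ_succ, Matrix.vecHead, Matrix.vecTail] <;>
      linear_combination (w ^ 2) * hii
  rw [hA]
  ext i j
  fin_cases i <;> fin_cases j <;>
    simp [OB, pow_succ, pow_zero, one_mul, Matrix.mul_apply, Fin.sum_univ_succ,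
      Matrix.smul_apply, Matrix.one_apply] <;>
    ring

end
end

section
/- The nine matrices 1, O_A, O_B, O_A², O_A O_B, O_B O_A, O_B², O_A² O_B, O_A O_B² are linearly independent over ℂ(Q), where O_A = diag(−i(Q²−Q^{−2}), 0, i(Q²−Q^{−2})) and O_B has rows (0,1,0), (−(Q²−Q^{−2})²/2, 0, 1), (0, −(Q²−Q^{−2})²/2, 0). Consequently the subalgebra of 3×3 matrices over ℂ(Q) generated by O_A and O_B has dimension at least 9, hence equals all of Mat₃(ℂ(Q)). -/
noncomputable section

/-!
Write `O_A = diag(-a, 0, a)` and `O_B = [[0,1,0],[s,0,1],[0,s,0]]` with `a = i w`, `s = -w²/2`,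
`w = Q² - Q⁻²`. A vanishing combination of the nine words gives one linear equation per entry.
The entries come in mirror pairs `(0,2)/(2,0)`, `(1,0)/(1,2)`, `(0,1)/(2,1)`, `(0,0)/(2,2)` whose
difference (or sum) isolates a single coefficient times a product of `2`, `a` and `s`, which is
nonzero since `Q⁴ ≠ 1`. Nine independent elements of the nine-dimensional `Mat₃(ℂ(Q))` span it,
so any subalgebra containing them is everything.
-/

open Polynomial

theorem Subalgebra.eq_top_of_linearIndependent_of_card_eq_finrank {K A ι : Type*} [Field K]
    [Ring A] [Algebra K A] [Fintype ι] [Nonempty ι] {S : Subalgebra K A} {v : ι → A}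
    (hv : LinearIndependent K v) (hcard : Fintype.card ι = Module.finrank K A)
    (hS : ∀ i, v i ∈ S) : S = ⊤ := by
  rw [← Algebra.toSubmodule_eq_top, eq_top_iff, ← hv.span_eq_top_of_card_eq_finrank hcard]
  exact Submodule.span_le.2 (Set.range_subset_iff.2 hS)

theorem linearIndependent_words_of_diag_of_tridiag {K : Type*} [Field K] {a s : K}
    (h2 : (2 : K) ≠ 0) (ha : a ≠ 0) (hs : s ≠ 0) {A B : Matrix (Fin 3) (Fin 3) K}
    (hA : A = !![-a, 0, 0; 0, 0, 0; 0, 0, a]) (hB : B = !![0, 1, 0; s, 0, 1; 0, s, 0]) :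
    LinearIndependent K ![1, A, B, A ^ 2, A * B, B * A, B ^ 2, A ^ 2 * B, A * B ^ 2] := by
  rw [Fintype.linearIndependent_iff]
  intro g hg
  simp [← Matrix.ext_iff, Fin.forall_fin_succ, Fin.sum_univ_succ, hA, hB, pow_two,
    Matrix.one_fin_three] at hg
  obtain ⟨⟨h00, h01, h02⟩, ⟨h10, h11, h12⟩, ⟨h20, h21, h22⟩⟩ := hg
  have g8 : g 8 = 0 := by
    have : (2 * a * s ^ 2) * g 8 = 0 := by linear_combination h20 - s ^ 2 * h02
    simpa [h2, ha, hs] using this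
  have g6 : g 6 = 0 := by linear_combination h02 + a * g8
  have g0 : g 0 = 0 := by linear_combination h11 - 2 * s * g6
  have g5 : g 5 = 0 := by
    have : (2 * a * s) * g 5 = 0 := by linear_combination s * h12 - h10
    simpa [h2, ha, hs] using this
  have g2 : g 2 = 0 := by linear_combination h12 - a * g5
  have g4 : g 4 = 0 := by
    have : (2 * a * s) * g 4 = 0 := by linear_combination h21 - s * h01
    simpa [h2, ha, hs] using this
  have g7 : g 7 = 0 := by
    have : a ^ 2 * g 7 = 0 := by linear_combination h01 - g2 + a * g4
    simpa [ha] using this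
  have g1 : g 1 = 0 := by
    have : (2 * a) * g 1 = 0 := by linear_combination h22 - h00 - 2 * a * s * g8
    simpa [h2, ha] using this
  have g3 : g 3 = 0 := by
    have : a ^ 2 * g 3 = 0 := by
      linear_combination h22 - g0 - a * g1 - s * g6 - a * s * g8
    simpa [ha] using this
  intro i
  fin_cases i <;> assumption

lemma w_ne_zero : w ≠ 0 := by
  have hw : w * Qv ^ 2 = algebraMap ℂ[X] (RatFunc ℂ) (X ^ 4 - C 1) := by
    have hQ : (RatFunc.X : RatFunc ℂ) ≠ 0 := RatFunc.X_ne_zero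
    simp only [w, Qv, map_sub, map_pow, RatFunc.algebraMap_X, map_one]
    field_simp
  intro h
  rw [h, zero_mul, eq_comm, map_eq_zero_iff _ (IsFractionRing.injective _ _)] at hw
  exact X_pow_sub_C_ne_zero (by norm_num) 1 hw

lemma ii_ne_zero : ii ≠ 0 := by simp [ii, Complex.I_ne_zero]

/-- the nine matrices `1, O_A, O_B, O_A², O_A O_B, O_B O_A, O_B²,
O_A² O_B, O_A O_B²` are linearly independent over `ℂ(Q)`; consequently the
subalgebra of `Mat₃(ℂ(Q))` generated by `O_A` and `O_B` is all of `Mat₃(ℂ(Q))`. -/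
theorem stmt15 :
    LinearIndependent (RatFunc ℂ)
      ![(1 : Matrix (Fin 3) (Fin 3) (RatFunc ℂ)), OA, OB, OA ^ 2, OA * OB, OB * OA,
        OB ^ 2, OA ^ 2 * OB, OA * OB ^ 2] ∧
    Algebra.adjoin (RatFunc ℂ) {OA, OB} = ⊤ := by
  have hind := linearIndependent_words_of_diag_of_tridiag (A := OA) (B := OB) two_ne_zero
    (mul_ne_zero ii_ne_zero w_ne_zero)
    (div_ne_zero (neg_ne_zero.2 (pow_ne_zero 2 w_ne_zero)) two_ne_zero) rfl rfl
  refine ⟨hind, Subalgebra.eq_top_of_linearIndependent_of_card_eq_finrank hind ?_ ?_⟩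
  · simp [Module.finrank_matrix]
  · have hA : OA ∈ Algebra.adjoin (RatFunc ℂ) {OA, OB} := Algebra.subset_adjoin (by simp)
    have hB : OB ∈ Algebra.adjoin (RatFunc ℂ) {OA, OB} := Algebra.subset_adjoin (by simp)
    simp only [Fin.forall_fin_succ, IsEmpty.forall_iff, and_true]
    exact ⟨one_mem _, hA, hB, pow_mem hA 2, mul_mem hA hB, mul_mem hB hA, pow_mem hB 2,
      mul_mem (pow_mem hA 2) hB, mul_mem hA (pow_mem hB 2)⟩

end
end
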